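/- arXiv:2008.04685 — 3 statements merged into one kernel-verified Lean document; each statement's English description precedes it below -/
import Mathlib

section
/- Let $n, k, j$ be non-negative integers satisfying $n/2 \geq k \geq j$ (i.e. $2k \leq n$ and $j \leq k$). Then the rational number $\sum_{i=0}^{k-j} \frac{(-1)^{i}\,(n-2k+2i+1)\,(n-2k+i)!}{i!\,(k-i-j)!\,(n-k+i-j+1)!}$ equals $0$ if $k > j$, and equals $1$ if $k = j$. -/
/-!
With `a = n - 2k` and `m = k - j` the sum is `∑_{i ≤ m} term a m i`. For `i < m`, `m * term a m i`
is the forward difference of `antidiff a m`, and `m * term a m m = -antidiff a m m`, so `m` times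
the sum telescopes to `-antidiff a m 0 = 0`. For `m = 0` the single term is `1`.
-/

open Nat

namespace AltFactorialSum

noncomputable def term (a m i : ℕ) : ℚ :=
  (-1) ^ i * (a + 2 * i + 1) * (a + i)! / (i ! * (m - i)! * (a + m + i + 1)!)

noncomputable def antidiff (a m i : ℕ) : ℚ :=
  (-1) ^ (i + 1) * i * (a + i)! / (i ! * (m - i)! * (a + m + i)!)

theorem mul_term_eq_sub {a m i : ℕ} (hi : i < m) :
    m * term a m i = antidiff a m (i + 1) - antidiff a m i := by
  obtain ⟨b, rfl⟩ : ∃ b, m = i + 1 + b := ⟨m - i - 1, by omega⟩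
  have h₁ : i + 1 + b - i = b + 1 := by omega
  have h₂ : i + 1 + b - (i + 1) = b := by omega
  have h₃ : a + (i + 1 + b) + (i + 1) = a + (i + 1 + b) + i + 1 := by omega
  simp only [term, antidiff, h₁, h₂, h₃, ← add_assoc a i 1, Nat.factorial_succ]
  push_cast
  field_simp
  ring

theorem mul_term_self (a m : ℕ) : m * term a m m = -antidiff a m m := by
  simp only [term, antidiff, Nat.sub_self, Nat.factorial_zero, Nat.factorial_succ]
  push_cast
  field_simp
  ring

theorem sum_term_of_pos {a m : ℕ} (hm : 0 < m) :
    ∑ i ∈ Finset.range (m + 1), term a m i = 0 := by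
  have htele : m * ∑ i ∈ Finset.range (m + 1), term a m i = 0 := by
    rw [Finset.mul_sum, Finset.sum_range_succ, mul_term_self,
      Finset.sum_congr rfl fun i hi => mul_term_eq_sub (Finset.mem_range.mp hi),
      Finset.sum_range_sub]
    simp [antidiff]
  exact (mul_eq_zero.mp htele).resolve_left (by exact_mod_cast hm.ne')

theorem sum_term_zero (a : ℕ) : ∑ i ∈ Finset.range 1, term a 0 i = 1 := by
  simp only [Finset.sum_range_one, term, Nat.factorial_succ]
  push_cast
  field_simp
  ring

end AltFactorialSum

open AltFactorialSum in
theorem stmt_0 (n k j : ℕ) (h2k : 2 * k ≤ n) (hjk : j ≤ k) :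
    (∑ i ∈ Finset.range (k - j + 1),
      ((-1 : ℚ) ^ i * (n - 2 * k + 2 * i + 1) * (Nat.factorial (n - 2 * k + i))) /
        ((Nat.factorial i) * (Nat.factorial (k - i - j)) *
          (Nat.factorial (n - k + i - j + 1))))
      = if j < k then 0 else 1 := by
  have hterm (i : ℕ) : term (n - 2 * k) (k - j) i =
      (-1 : ℚ) ^ i * (n - 2 * k + 2 * i + 1) * (n - 2 * k + i)! /
        (i ! * (k - i - j)! * (n - k + i - j + 1)!) := by
    rw [term, Nat.cast_sub h2k, show k - j - i = k - i - j by omega,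
      show n - 2 * k + (k - j) + i + 1 = n - k + i - j + 1 by omega]
    push_cast
    ring
  simp_rw [← hterm]
  split_ifs with h
  · exact sum_term_of_pos (by omega)
  · rw [show k - j = 0 by omega]
    exact sum_term_zero _
end

section
/- Let $n, k, j$ be non-negative integers satisfying $2k \leq n$ and $j < k$. Then $\sum_{i=0}^{k-j} (-1)^{i}\,(n-2k+2i+1)\,\binom{n-2k+i}{i}\,\binom{n-2j+1}{k-i-j} = 0$, where the sum is computed in the integers. -/
open Finset

private lemma alt_sum (b K : ℕ) :
    ∑ i ∈ range (K+1), (-1:ℤ)^i * ((b+1).choose (K-i)) = b.choose K := by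
  induction K with
  | zero => simp
  | succ K ih =>
    rw [Finset.sum_range_succ']
    have h : ∑ i ∈ range (K+1), (-1:ℤ)^(i+1) * ((b+1).choose (K+1-(i+1)))
        = -∑ i ∈ range (K+1), (-1:ℤ)^i * ((b+1).choose (K-i)) := by
      rw [← Finset.sum_neg_distrib]
      apply Finset.sum_congr rfl
      intro i _
      rw [Nat.succ_sub_succ]
      ring
    rw [h, ih]
    have hp : (b+1).choose (K+1) = b.choose K + b.choose (K+1) := Nat.choose_succ_succ b K
    simp only [Nat.sub_zero, pow_zero, one_mul, hp]
    push_cast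
    ring

private lemma keyD : ∀ (a b K : ℕ),
    ∑ i ∈ range (K+1), (-1:ℤ)^i * ((a+i).choose i) * ((a+1+b).choose (K-i)) = b.choose K := by
  intro a
  induction a with
  | zero =>
    intro b K
    have h := alt_sum b K
    calc ∑ i ∈ range (K+1), (-1:ℤ)^i * ((0+i).choose i) * ((0+1+b).choose (K-i))
        = ∑ i ∈ range (K+1), (-1:ℤ)^i * ((b+1).choose (K-i)) := by
          apply Finset.sum_congr rfl
          intro i _
          rw [Nat.zero_add, Nat.choose_self, show 0+1+b = b+1 from by omega]
          push_cast; ring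
      _ = b.choose K := h
  | succ a ih =>
    intro b K
    induction K with
    | zero => simp
    | succ K ihK =>
      have split : ∑ i ∈ range (K+1+1), (-1:ℤ)^i * ((a+1+i).choose i) * ((a+1+1+b).choose (K+1-i))
          = (∑ i ∈ range (K+1+1), (-1:ℤ)^i * ((a+i).choose i) * ((a+1+1+b).choose (K+1-i)))
            + ∑ i ∈ range (K+1+1), (-1:ℤ)^i * (((a+1+i).choose i : ℤ) - ((a+i).choose i : ℤ)) * ((a+1+1+b).choose (K+1-i)) := by
        rw [← Finset.sum_add_distrib]
        apply Finset.sum_congr rfl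
        intro i _
        ring
      rw [split]
      have h2 : ∑ i ∈ range (K+1+1), (-1:ℤ)^i * (((a+1+i).choose i : ℤ) - ((a+i).choose i : ℤ)) * ((a+1+1+b).choose (K+1-i))
          = -∑ i ∈ range (K+1), (-1:ℤ)^i * ((a+1+i).choose i) * ((a+1+1+b).choose (K-i)) := by
        rw [Finset.sum_range_succ']
        have h0 : (-1:ℤ)^0 * (((a+1+0).choose 0 : ℤ) - ((a+0).choose 0 : ℤ)) * ((a+1+1+b).choose (K+1-0)) = 0 := by
          simp
        rw [h0, add_zero, ← Finset.sum_neg_distrib]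
        apply Finset.sum_congr rfl
        intro t _
        have hpas : (a+1+(t+1)).choose (t+1) = (a+1+t).choose t + (a+1+t).choose (t+1) := by
          rw [show a+1+(t+1) = (a+1+t)+1 from by omega]
          exact Nat.choose_succ_succ (a+1+t) t
        have hpas' : (((a+1+(t+1)).choose (t+1) : ℤ)) - ((a+(t+1)).choose (t+1) : ℤ) = ((a+1+t).choose t : ℤ) := by
          rw [hpas, show a+(t+1) = a+1+t from by omega]
          push_cast; ring
        rw [Nat.succ_sub_succ, hpas']
        ring
      rw [h2, ihK]
      have h3 : ∑ i ∈ range (K+1+1), (-1:ℤ)^i * ((a+i).choose i) * ((a+1+1+b).choose (K+1-i)) = ((b+1).choose (K+1) : ℤ) := by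
        have h := ih (b+1) (K+1)
        rw [show a+1+(b+1) = a+1+1+b from by omega] at h
        exact h
      rw [h3]
      have hp : (b+1).choose (K+1) = b.choose K + b.choose (K+1) := Nat.choose_succ_succ b K
      rw [hp]
      push_cast
      ring

theorem stmt_1 (n k j : ℕ) (h2k : 2 * k ≤ n) (hjk : j < k) :
    (∑ i ∈ Finset.range (k - j + 1),
      (-1 : ℤ) ^ i * (n - 2 * k + 2 * i + 1) *
        (Nat.choose (n - 2 * k + i) i) * (Nat.choose (n - 2 * j + 1) (k - i - j))) = 0 := by
  obtain ⟨K, hK⟩ : ∃ K, k - j = K + 1 := ⟨k - j - 1, by omega⟩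
  set m := n - 2 * k with hm
  have hmz : (n:ℤ) - 2*(k:ℤ) = (m:ℤ) := by omega
  have hrw : ∑ i ∈ Finset.range (k - j + 1),
      (-1 : ℤ) ^ i * (n - 2 * k + 2 * i + 1) *
        (Nat.choose (n - 2 * k + i) i) * (Nat.choose (n - 2 * j + 1) (k - i - j))
      = (∑ i ∈ range (K+1+1), (-1:ℤ)^i * ((m:ℤ)+1) * (((m+1)+i).choose i) * (((m+1)+1+(2*K+1)).choose (K+1-i)))
        + ∑ i ∈ range (K+1+1), (-1:ℤ)^i * ((i:ℤ) * ((m+i).choose i)) * (((m+1)+1+(2*K+1)).choose (K+1-i)) := by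
    rw [hK, ← Finset.sum_add_distrib]
    apply Finset.sum_congr rfl
    intro i hi
    have h1 : n - 2*j + 1 = (m+1)+1+(2*K+1) := by omega
    have h2 : k - i - j = K + 1 - i := by omega
    have hnat : (m + i + 1) * Nat.choose (m+i) i = (m+1) * Nat.choose (m+1+i) i := by
      calc (m + i + 1) * Nat.choose (m+i) i = (m+i+1).choose (i+1) * (i+1) :=
            Nat.add_one_mul_choose_eq (m+i) i
        _ = (m+i+1).choose i * (m+i+1-i) := Nat.choose_succ_right_eq _ _
        _ = (m+1) * Nat.choose (m+1+i) i := by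
            rw [show m+i+1-i = m+1 from by omega, show m+i+1 = m+1+i from by omega, mul_comm]
    have hnatz : ((m:ℤ) + i + 1) * ((Nat.choose (m+i) i : ℤ)) = ((m:ℤ)+1) * ((Nat.choose (m+1+i) i : ℤ)) := by
      exact_mod_cast congrArg (Nat.cast : ℕ → ℤ) hnat
    rw [h1, h2, hmz]
    linear_combination ((-1:ℤ)^i * ((((m+1)+1+(2*K+1)).choose (K+1-i) : ℤ))) * hnatz
  rw [hrw]
  have hA : ∑ i ∈ range (K+1+1), (-1:ℤ)^i * ((m:ℤ)+1) * (((m+1)+i).choose i) * (((m+1)+1+(2*K+1)).choose (K+1-i))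
      = ((m:ℤ)+1) * ((2*K+1).choose (K+1)) := by
    calc ∑ i ∈ range (K+1+1), (-1:ℤ)^i * ((m:ℤ)+1) * (((m+1)+i).choose i) * (((m+1)+1+(2*K+1)).choose (K+1-i))
        = ((m:ℤ)+1) * ∑ i ∈ range (K+1+1), (-1:ℤ)^i * (((m+1)+i).choose i) * (((m+1)+1+(2*K+1)).choose (K+1-i)) := by
          rw [Finset.mul_sum]
          apply Finset.sum_congr rfl
          intro i _
          ring
      _ = ((m:ℤ)+1) * ((2*K+1).choose (K+1)) := by rw [keyD (m+1) (2*K+1) (K+1)]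
  have hB : ∑ i ∈ range (K+1+1), (-1:ℤ)^i * ((i:ℤ) * ((m+i).choose i)) * (((m+1)+1+(2*K+1)).choose (K+1-i))
      = -(((m:ℤ)+1) * ((2*K+1).choose K)) := by
    rw [Finset.sum_range_succ']
    have h0 : (-1:ℤ)^0 * (((0:ℕ):ℤ) * ((m+0).choose 0)) * (((m+1)+1+(2*K+1)).choose (K+1-0)) = 0 := by
      simp
    rw [h0, add_zero]
    have hc : ∀ t ∈ range (K+1),
        (-1:ℤ)^(t+1) * (((t+1:ℕ):ℤ) * ((m+(t+1)).choose (t+1))) * (((m+1)+1+(2*K+1)).choose (K+1-(t+1)))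
        = -(((m:ℤ)+1)) * ((-1:ℤ)^t * (((m+1)+t).choose t) * (((m+1)+1+(2*K+1)).choose (K-t))) := by
      intro t _
      have hnat : (t+1) * Nat.choose (m+t+1) (t+1) = (m+1) * Nat.choose (m+1+t) t := by
        calc (t+1) * Nat.choose (m+t+1) (t+1) = Nat.choose (m+t+1) (t+1) * (t+1) := mul_comm _ _
          _ = Nat.choose (m+t+1) t * (m+t+1-t) := Nat.choose_succ_right_eq _ _
          _ = (m+1) * Nat.choose (m+1+t) t := by
              rw [show m+t+1-t = m+1 from by omega, show m+t+1 = m+1+t from by omega, mul_comm]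
      have hz : ((t:ℤ)+1) * ((Nat.choose (m+t+1) (t+1) : ℤ)) = ((m:ℤ)+1) * ((Nat.choose (m+1+t) t : ℤ)) := by
        exact_mod_cast congrArg (Nat.cast : ℕ → ℤ) hnat
      rw [Nat.succ_sub_succ, show m+(t+1) = m+t+1 from by omega]
      push_cast
      linear_combination (-((-1:ℤ)^t) * ((((m+1)+1+(2*K+1)).choose (K-t) : ℤ))) * hz
    rw [Finset.sum_congr rfl hc, ← Finset.mul_sum, keyD (m+1) (2*K+1) K]
    ring
  rw [hA, hB]
  have hsymm : (2*K+1).choose K = (2*K+1).choose (K+1) := by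
    have h := Nat.choose_symm (show K+1 ≤ 2*K+1 by omega)
    rw [show 2*K+1-(K+1) = K from by omega] at h
    exact h
  rw [hsymm]
  ring
end

section
/- Let $n, k, j$ be non-negative integers satisfying $2k \leq n$ and $j < k$. Then $\sum_{i=0}^{k-j} (-1)^{i}\,\binom{n-2k+i+1}{i}\,\binom{n-2j+1}{k-i-j} = \binom{2k-2j-1}{k-j}$, where the sum is computed in the integers. -/
open Finset

lemma Ring.choose_neg_natCast_add_one (d i : ℕ) :
    Ring.choose (-((d + 1 : ℕ) : ℤ)) i = (-1) ^ i * ((d + i).choose i : ℤ) := by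
  rw [Ring.choose_neg, show ((d + 1 : ℕ) : ℤ) + i - 1 = ((d + i : ℕ) : ℤ) by push_cast; ring,
    Ring.choose_natCast, Units.smul_def, Int.coe_negOnePow_natCast, smul_eq_mul]

/-- Chu–Vandermonde applied to `-(d + 1) + (d + 1 + T) = T`, with upper negation
`choose (-(d + 1)) i = (-1) ^ i * choose (d + i) i`. -/
theorem sum_neg_one_pow_mul_add_choose_mul_choose (d T p : ℕ) :
    ∑ i ∈ range (p + 1), (-1 : ℤ) ^ i * (d + i).choose i * (d + 1 + T).choose (p - i)
      = T.choose p := by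
  have vandermonde := Ring.add_choose_eq (r := -((d + 1 : ℕ) : ℤ)) (s := ((d + 1 + T : ℕ) : ℤ))
    p (Commute.all _ _)
  rw [show -((d + 1 : ℕ) : ℤ) + ((d + 1 + T : ℕ) : ℤ) = (T : ℤ) by push_cast; ring,
    Ring.choose_natCast, Nat.sum_antidiagonal_eq_sum_range_succ_mk] at vandermonde
  simp only [Ring.choose_neg_natCast_add_one, Ring.choose_natCast] at vandermonde
  exact vandermonde.symm

theorem stmt_2 (n k j : ℕ) (h2k : 2 * k ≤ n) (hjk : j < k) :
    (∑ i ∈ Finset.range (k - j + 1),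
      (-1 : ℤ) ^ i * (Nat.choose (n - 2 * k + i + 1) i) *
        (Nat.choose (n - 2 * j + 1) (k - i - j)))
      = Nat.choose (2 * k - 2 * j - 1) (k - j) := by
  rw [← sum_neg_one_pow_mul_add_choose_mul_choose (n - 2 * k + 1) (2 * k - 2 * j - 1) (k - j)]
  refine sum_congr rfl fun i _ => ?_
  rw [show n - 2 * k + 1 + 1 + (2 * k - 2 * j - 1) = n - 2 * j + 1 by omega,
    show n - 2 * k + 1 + i = n - 2 * k + i + 1 by omega, show k - j - i = k - i - j by omega]
end
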